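/- In the hypercube Q(n) with n ≥ 4, the union of the cyclic shifts σ^ℓ(D(n,1)) for ℓ = 0, 1, ..., n-1 forms a cycle of length 2n in the subgraph induced by levels 1 and 2 that visits all n vertices in level 1, where D(n,1) = (a(n,1), a(n,2), b(n,1)), a(n,k) is the bitstring of length n with k ones in the last k positions, b(n,k) = a(n-1,k)∘0, and σ^ℓ cyclically shifts a bitstring left by ℓ positions. -/

import Mathlib

open SimpleGraph

/-- The bipartite Kneser graph `H(n,k)`: vertices are the `k`-element and
`(n-k)`-element subsets of `[n]`, with an edge when one is a (proper) subset of the other. -/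
def bipKneser (n k : ℕ) : SimpleGraph {s : Finset (Fin n) // s.card = k ∨ s.card = n - k} where
  Adj s t := s.1 ⊂ t.1 ∨ t.1 ⊂ s.1
  symm := ⟨by intro s t h; tauto⟩
  loopless := ⟨by intro s h; rcases h with h | h <;> exact ssubset_irrefl _ h⟩

/-- The Kneser graph `K(n,k)`: vertices are the `k`-element subsets of `[n]`,
with an edge between any two disjoint sets. -/
def kneser (n k : ℕ) : SimpleGraph {s : Finset (Fin n) // s.card = k} where
  Adj s t := s ≠ t ∧ Disjoint s.1 t.1
  symm := ⟨by intro s t h; exact ⟨h.1.symm, h.2.symm⟩⟩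
  loopless := ⟨by intro s h; exact h.1 rfl⟩

/-- The hypercube `Q(n)`: vertices are bitstrings of length `n`, with an edge
between two bitstrings differing in exactly one bit. -/
def hypercube (n : ℕ) : SimpleGraph (Fin n → Bool) where
  Adj x y := hammingDist x y = 1
  symm := ⟨by intro x y h; rwa [hammingDist_comm]⟩
  loopless := ⟨by intro x h; simp [hammingDist_self] at h⟩

/-- The level of a bitstring: its number of `1`-entries. -/
def level {n : ℕ} (x : Fin n → Bool) : ℕ := (Finset.univ.filter (fun i => x i = true)).card

/-- The subset of `[n]` whose characteristic vector is the bitstring `x`. -/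
def toSet {n : ℕ} (x : Fin n → Bool) : Finset (Fin n) := Finset.univ.filter (fun i => x i = true)

/-- `a(n,k)`: the bitstring of length `n` with `1`s exactly in the last `k` positions. -/
def abit (n k : ℕ) : Fin n → Bool := fun i => decide (n - k ≤ i.val)

/-- `b(n,k) = a(n-1,k)∘0`: the bitstring of length `n` with `1`s exactly in positions
`n-1-k, …, n-2`. -/
def bbit (n k : ℕ) : Fin n → Bool := fun i => decide (n - 1 - k ≤ i.val ∧ i.val < n - 1)

/-- `σ^ℓ`: cyclic left shift of a bitstring by `ℓ` positions. -/
def cycShift (n ℓ : ℕ) (x : Fin n → Bool) : Fin n → Bool :=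
  fun i => x ⟨(i.val + ℓ) % n, Nat.mod_lt _ (Nat.lt_of_le_of_lt (Nat.zero_le _) i.isLt)⟩

/-!
Identify a bitstring with its set of `1`-positions, read in `ℤ/n`. Then `σ^ℓ(a(n,1)) = {-1-ℓ}`
and `σ^ℓ(a(n,2)) = {-2-ℓ, -1-ℓ}`, so the sequence `a(n,1), a(n,2), σ(a(n,1)), σ(a(n,2)), …`
alternately adds and removes one position: consecutive terms are adjacent in `Q(n)`, and the
sequence is periodic of period `2n`. Its first `2n` terms are distinct: the level separates even
from odd indices, and the positions determine `ℓ` modulo `n` (for the pairs this needs `2 ≠ 0`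
in `ℤ/n`). A periodic walk that is injective on one period of length at least `3` is the image of
the cycle graph `C_{2n}` under an injective homomorphism, hence a cycle.
-/

namespace SimpleGraph

variable {V : Type*} {G : SimpleGraph V}

theorem exists_isCycle_of_periodic {f : ℕ → V} {k : ℕ} (hk : 3 ≤ k)
    (hadj : ∀ m, G.Adj (f m) (f (m + 1))) (hper : Function.Periodic f k)
    (hinj : Set.InjOn f (Set.Iio k)) :
    ∃ c : G.Walk (f 0) (f 0), c.IsCycle ∧ c.length = k ∧
      ∀ v, v ∈ c.support ↔ ∃ m < k, f m = v := by
  obtain ⟨j, rfl⟩ : ∃ j, k = j + 3 := ⟨k - 3, by omega⟩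
  have hsucc (i : Fin (j + 3)) : G.Adj (f i) (f ↑(i + 1)) := by
    rw [Fin.val_add, Fin.val_one, hper.map_mod_nat]
    exact hadj i
  let φ : cycleGraph (j + 3) →g G :=
    { toFun := fun i => f i
      map_rel' := by
        rintro u v (h | h)
        · obtain rfl := sub_eq_iff_eq_add'.mp h
          exact (hsucc v).symm
        · obtain rfl := sub_eq_iff_eq_add'.mp h
          exact hsucc u }
  have hφ : Function.Injective φ := fun u v h => Fin.ext (hinj u.isLt v.isLt h)
  have h0 : φ 0 = f 0 := rfl
  refine ⟨(Walk.map φ (cycleGraph.cycle j)).copy h0 h0, ?_, ?_, fun v => ?_⟩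
  · exact (Walk.isCycle_copy _ _).mpr (cycleGraph.isCycle_cycle.map hφ)
  · simp
  · simp only [Walk.support_copy, Walk.support_map, List.mem_map]
    constructor
    · rintro ⟨i, -, rfl⟩; exact ⟨i, i.isLt, rfl⟩
    · rintro ⟨m, hm, rfl⟩
      refine ⟨⟨m, hm⟩, ?_, rfl⟩
      have := (cycleGraph.cycle j).getVert_mem_support (j + 3 - m)
      rw [cycleGraph.getVert_cycle (by omega)] at this
      convert this using 2
      rw [Nat.sub_sub_self hm.le, Nat.mod_eq_of_lt hm]

end SimpleGraph

namespace Fin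

open Fin.NatCast Fin.CommRing

variable {n : ℕ} [NeZero n]

theorem natCast_ne_zero_of_lt {a : ℕ} (ha : 0 < a) (han : a < n) : (a : Fin n) ≠ 0 := by
  rw [Ne, Fin.natCast_eq_zero]
  exact fun h => absurd (Nat.le_of_dvd ha h) (by omega)

theorem natCast_injOn : Set.InjOn (fun ℓ : ℕ => (ℓ : Fin n)) (Set.Iio n) := by
  intro ℓ hℓ ℓ' hℓ' h
  simpa [Fin.val_cast_of_lt hℓ, Fin.val_cast_of_lt hℓ'] using congrArg Fin.val h

theorem neg_two_sub_ne_neg_one_sub (hn : 2 ≤ n) (ℓ : ℕ) : (-2 - ℓ : Fin n) ≠ -1 - ℓ := by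
  intro h
  refine natCast_ne_zero_of_lt (n := n) (a := 1) (by norm_num) (by omega) ?_
  push_cast
  linear_combination -h

end Fin

theorem toSet_injective {n : ℕ} : Function.Injective (toSet (n := n)) := by
  intro x y h
  funext i
  simpa [toSet] using congrArg (i ∈ ·) h

theorem level_eq_card_toSet {n : ℕ} (x : Fin n → Bool) : level x = (toSet x).card := rfl

theorem hypercube_adj_of_toSet_eq_insert {n : ℕ} {x y : Fin n → Bool} {a : Fin n}
    (ha : a ∉ toSet x) (hxy : toSet y = insert a (toSet x)) : (hypercube n).Adj x y := by
  show hammingDist x y = 1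
  rw [hammingDist, Finset.card_eq_one]
  refine ⟨a, Finset.ext fun i => ?_⟩
  have hy := congrArg (i ∈ ·) hxy
  simp only [toSet, Finset.mem_filter, Finset.mem_univ, true_and, Finset.mem_insert] at ha hy
  by_cases hi : i = a
  · subst hi; simp_all
  · simp_all

section Rotation

open Fin.NatCast Fin.CommRing

variable {n : ℕ} [NeZero n]

theorem cycShift_apply (ℓ : ℕ) (x : Fin n → Bool) (i : Fin n) :
    cycShift n ℓ x i = x (i + (ℓ : Fin n)) := by
  simp only [cycShift]
  congr 1
  ext
  simp [Fin.val_add, Fin.val_natCast]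

theorem cycShift_zero (x : Fin n → Bool) : cycShift n 0 x = x := by
  funext i; simp [cycShift_apply]

theorem cycShift_add_self (ℓ : ℕ) (x : Fin n → Bool) : cycShift n (ℓ + n) x = cycShift n ℓ x := by
  funext i; simp [cycShift_apply]

theorem toSet_cycShift (ℓ : ℕ) (x : Fin n → Bool) :
    toSet (cycShift n ℓ x) = (toSet x).map (Equiv.subRight (ℓ : Fin n)).toEmbedding := by
  ext i
  simp [toSet, cycShift_apply]

theorem toSet_abit_one (hn : 2 ≤ n) : toSet (abit n 1) = {-1} := by
  ext ⟨i, hi⟩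
  simp only [toSet, abit, Finset.mem_filter, Finset.mem_univ, true_and, decide_eq_true_eq,
    Finset.mem_singleton, eq_neg_iff_add_eq_zero, Fin.ext_iff, Fin.val_add_eq_ite,
    Fin.val_one', Nat.mod_eq_of_lt (show 1 < n by omega), Fin.val_zero]
  grind

theorem toSet_abit_two (hn : 3 ≤ n) : toSet (abit n 2) = {-2, -1} := by
  ext ⟨i, hi⟩
  simp only [toSet, abit, Finset.mem_filter, Finset.mem_univ, true_and, decide_eq_true_eq,
    Finset.mem_insert, Finset.mem_singleton, eq_neg_iff_add_eq_zero, Fin.ext_iff,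
    Fin.val_add_eq_ite, Fin.coe_ofNat_eq_mod, Nat.mod_eq_of_lt (show 1 < n by omega),
    Nat.mod_eq_of_lt (show 2 < n by omega), Nat.zero_mod]
  grind

theorem toSet_cycShift_abit_one (hn : 2 ≤ n) (ℓ : ℕ) :
    toSet (cycShift n ℓ (abit n 1)) = {-1 - (ℓ : Fin n)} := by
  simp [toSet_cycShift, toSet_abit_one hn]

theorem toSet_cycShift_abit_two (hn : 3 ≤ n) (ℓ : ℕ) :
    toSet (cycShift n ℓ (abit n 2)) = {-2 - (ℓ : Fin n), -1 - (ℓ : Fin n)} := by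
  simp [toSet_cycShift, toSet_abit_two hn]

theorem level_cycShift_abit_one (hn : 2 ≤ n) (ℓ : ℕ) : level (cycShift n ℓ (abit n 1)) = 1 := by
  rw [level_eq_card_toSet, toSet_cycShift_abit_one hn, Finset.card_singleton]

theorem level_cycShift_abit_two (hn : 3 ≤ n) (ℓ : ℕ) : level (cycShift n ℓ (abit n 2)) = 2 := by
  rw [level_eq_card_toSet, toSet_cycShift_abit_two hn,
    Finset.card_pair (Fin.neg_two_sub_ne_neg_one_sub (by omega) ℓ)]

theorem cycShift_abit_one_injOn (hn : 2 ≤ n) :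
    Set.InjOn (fun ℓ => cycShift n ℓ (abit n 1)) (Set.Iio n) := by
  intro ℓ hℓ ℓ' hℓ' h
  have h := congrArg toSet h
  simp only [toSet_cycShift_abit_one hn, Finset.singleton_inj, sub_right_inj] at h
  exact Fin.natCast_injOn hℓ hℓ' h

theorem cycShift_abit_two_injOn (hn : 3 ≤ n) :
    Set.InjOn (fun ℓ => cycShift n ℓ (abit n 2)) (Set.Iio n) := by
  intro ℓ hℓ ℓ' hℓ' h
  have h := congrArg (fun x => (toSet x : Set (Fin n))) h
  simp only [toSet_cycShift_abit_two hn, Finset.coe_pair, Set.pair_eq_pair_iff, sub_right_inj] at h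
  rcases h with ⟨h, -⟩ | ⟨h₁, h₂⟩
  · exact Fin.natCast_injOn hℓ hℓ' h
  · refine absurd ?_ (Fin.natCast_ne_zero_of_lt (n := n) (a := 2) (by norm_num) (by omega))
    push_cast
    linear_combination h₂ - h₁

theorem exists_cycShift_abit_one_of_level_eq_one (hn : 2 ≤ n) {x : Fin n → Bool}
    (hx : level x = 1) : ∃ ℓ < n, x = cycShift n ℓ (abit n 1) := by
  obtain ⟨j, hj⟩ := Finset.card_eq_one.mp hx
  refine ⟨(-1 - j).val, (-1 - j).isLt, toSet_injective ?_⟩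
  rw [toSet_cycShift_abit_one hn, Fin.cast_val_eq_self, sub_sub_cancel]
  exact hj

end Rotation

-- The concatenation of the paths `σ^ℓ(D(n,1)) = (σ^ℓ a(n,1), σ^ℓ a(n,2), σ^(ℓ+1) a(n,1))`,
-- using `b(n,1) = σ(a(n,1))`.
def shiftCycleVertex (n m : ℕ) : Fin n → Bool := cycShift n (m / 2) (abit n (m % 2 + 1))

theorem shiftCycleVertex_two_mul (n ℓ : ℕ) :
    shiftCycleVertex n (2 * ℓ) = cycShift n ℓ (abit n 1) := by
  simp [shiftCycleVertex]

theorem shiftCycleVertex_two_mul_add_one (n ℓ : ℕ) :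
    shiftCycleVertex n (2 * ℓ + 1) = cycShift n ℓ (abit n 2) := by
  simp [shiftCycleVertex, Nat.add_mod, Nat.add_div]

theorem exists_shiftCycleVertex_eq_iff (n : ℕ) (x : Fin n → Bool) :
    (∃ m < 2 * n, shiftCycleVertex n m = x) ↔
      ∃ ℓ < n, x = cycShift n ℓ (abit n 1) ∨ x = cycShift n ℓ (abit n 2) := by
  constructor
  · rintro ⟨m, hm, rfl⟩
    obtain ⟨ℓ, rfl | rfl⟩ := Nat.even_or_odd' m
    · exact ⟨ℓ, by omega, .inl (shiftCycleVertex_two_mul n ℓ)⟩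
    · exact ⟨ℓ, by omega, .inr (shiftCycleVertex_two_mul_add_one n ℓ)⟩
  · rintro ⟨ℓ, hℓ, rfl | rfl⟩
    · exact ⟨2 * ℓ, by omega, shiftCycleVertex_two_mul n ℓ⟩
    · exact ⟨2 * ℓ + 1, by omega, shiftCycleVertex_two_mul_add_one n ℓ⟩

section Cycle

open Fin.NatCast Fin.CommRing

variable {n : ℕ} [NeZero n]

theorem shiftCycleVertex_periodic : Function.Periodic (shiftCycleVertex n) (2 * n) := by
  intro m
  rw [shiftCycleVertex, shiftCycleVertex, show (m + 2 * n) / 2 = m / 2 + n by omega,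
    show (m + 2 * n) % 2 = m % 2 by omega, cycShift_add_self]

theorem shiftCycleVertex_adj (hn : 3 ≤ n) (m : ℕ) :
    (hypercube n).Adj (shiftCycleVertex n m) (shiftCycleVertex n (m + 1)) := by
  have hne (ℓ : ℕ) := Fin.neg_two_sub_ne_neg_one_sub (n := n) (by omega) ℓ
  obtain ⟨ℓ, rfl | rfl⟩ := Nat.even_or_odd' m
  · rw [shiftCycleVertex_two_mul, shiftCycleVertex_two_mul_add_one]
    refine hypercube_adj_of_toSet_eq_insert (a := -2 - (ℓ : Fin n)) ?_ ?_
    · rw [toSet_cycShift_abit_one (by omega), Finset.mem_singleton]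
      exact hne ℓ
    · rw [toSet_cycShift_abit_one (by omega), toSet_cycShift_abit_two hn]
  · have hsucc : -1 - ((ℓ + 1 : ℕ) : Fin n) = -2 - ℓ := by push_cast; ring
    rw [shiftCycleVertex_two_mul_add_one, show 2 * ℓ + 1 + 1 = 2 * (ℓ + 1) by ring,
      shiftCycleVertex_two_mul]
    refine (hypercube_adj_of_toSet_eq_insert (a := -1 - (ℓ : Fin n)) ?_ ?_).symm
    · rw [toSet_cycShift_abit_one (by omega), hsucc, Finset.mem_singleton]
      exact (hne ℓ).symm
    · rw [toSet_cycShift_abit_one (by omega), hsucc, toSet_cycShift_abit_two hn,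
        Finset.pair_comm]

theorem shiftCycleVertex_injOn (hn : 3 ≤ n) :
    Set.InjOn (shiftCycleVertex n) (Set.Iio (2 * n)) := by
  have hne (ℓ ℓ' : ℕ) : cycShift n ℓ (abit n 1) ≠ cycShift n ℓ' (abit n 2) := fun h => by
    simpa [level_cycShift_abit_one (n := n) (by omega), level_cycShift_abit_two hn] using
      congrArg level h
  intro m hm m' hm' h
  simp only [Set.mem_Iio] at hm hm'
  obtain ⟨ℓ, rfl | rfl⟩ := Nat.even_or_odd' m <;> obtain ⟨ℓ', rfl | rfl⟩ := Nat.even_or_odd' m' <;>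
    simp only [shiftCycleVertex_two_mul, shiftCycleVertex_two_mul_add_one] at h
  · rw [cycShift_abit_one_injOn (by omega) (Set.mem_Iio.mpr (by omega))
      (Set.mem_Iio.mpr (by omega)) h]
  · exact absurd h (hne ℓ ℓ')
  · exact absurd h.symm (hne ℓ' ℓ)
  · rw [cycShift_abit_two_injOn hn (Set.mem_Iio.mpr (by omega)) (Set.mem_Iio.mpr (by omega)) h]

end Cycle

/-- In `Q(n)` with `n ≥ 4`, the union of the cyclic shifts `σ^ℓ(D(n,1))`,
`ℓ = 0,…,n-1`, where `D(n,1) = (a(n,1), a(n,2), b(n,1))`, forms a cycle of length `2n`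
within levels `1` and `2` that visits all `n` vertices in level `1`. -/
theorem stmt_16 (n : ℕ) (hn : 4 ≤ n) :
    ∃ c : (hypercube n).Walk (abit n 1) (abit n 1), c.IsCycle ∧ c.length = 2 * n ∧
      (∀ v ∈ c.support, level v = 1 ∨ level v = 2) ∧
      (∀ v : Fin n → Bool, level v = 1 → v ∈ c.support) ∧
      (∀ v : Fin n → Bool, v ∈ c.support ↔
        ∃ ℓ < n, v = cycShift n ℓ (abit n 1) ∨ v = cycShift n ℓ (abit n 2)) := by
  have : NeZero n := ⟨by omega⟩
  obtain ⟨c, hcycle, hlength, hsupport⟩ := exists_isCycle_of_periodic (by omega : 3 ≤ 2 * n)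
    (shiftCycleVertex_adj (by omega)) shiftCycleVertex_periodic
    (shiftCycleVertex_injOn (by omega))
  have hstart : shiftCycleVertex n 0 = abit n 1 := by
    rw [← mul_zero 2, shiftCycleVertex_two_mul, cycShift_zero]
  have hsupport' (v : Fin n → Bool) : v ∈ c.support ↔
      ∃ ℓ < n, v = cycShift n ℓ (abit n 1) ∨ v = cycShift n ℓ (abit n 2) :=
    (hsupport v).trans (exists_shiftCycleVertex_eq_iff n v)
  refine ⟨c.copy hstart hstart, by simpa, by simpa, fun v hv => ?_, fun v hv => ?_, fun v => ?_⟩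
  · rw [Walk.support_copy, hsupport'] at hv
    obtain ⟨ℓ, -, rfl | rfl⟩ := hv
    · exact .inl (level_cycShift_abit_one (by omega) ℓ)
    · exact .inr (level_cycShift_abit_two (by omega) ℓ)
  · obtain ⟨ℓ, hℓ, rfl⟩ := exists_cycShift_abit_one_of_level_eq_one (by omega) hv
    rw [Walk.support_copy, hsupport']
    exact ⟨ℓ, hℓ, .inl rfl⟩
  · rw [Walk.support_copy, hsupport']
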